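/- If m ∉ dom(p), and t reduces to a proper p(m↦0)-whnf and to a proper p(m↦1)-whnf, then t reduces to a proper p-whnf. Here a p-whnf is proper if it is canonical (a constructor/lambda/pair/type former, having no further reduction at any extension of p) or of the form E[f k̄] with k ∉ dom(p). -/

import Mathlib

/-- A condition: (the graph of) a finite partial function `ℕ ⇀ Bool`,
represented as a finite set of pairs. -/
abbrev Cond : Type := Finset (ℕ × Bool)

/-- `p` is (the graph of) a partial function. -/
def IsFunc (p : Cond) : Prop := ∀ x ∈ p, ∀ y ∈ p, x.1 = y.1 → x.2 = y.2

instance (p : Cond) : Decidable (IsFunc p) := by unfold IsFunc; exact inferInstance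

/-- The domain of a condition. -/
def condDom (p : Cond) : Finset ℕ := p.image Prod.fst

/-- `condExt p n b` is `p(n ↦ b) = p ∪ {(n, b)}`. -/
def condExt (p : Cond) (n : ℕ) (b : Bool) : Cond := insert (n, b) p

/-- The partition relation `p ◁ S`. -/
inductive Partn : Cond → Finset Cond → Prop
  | refl (p : Cond) : Partn p {p}
  | split (p : Cond) (n : ℕ) (S₀ S₁ : Finset Cond) :
      n ∉ condDom p → Partn (condExt p n false) S₀ → Partn (condExt p n true) S₁ →
      Partn p (S₀ ∪ S₁)

/-- Terms of the untyped calculus, with a generic function symbol `gen` (the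
symbol `f`), booleans, numerals built from `zero`/`suc`, pairs, λ, and the
recursors. -/
inductive Tm : Type
  | var : ℕ → Tm
  | lam : Tm → Tm
  | app : Tm → Tm → Tm
  | pair : Tm → Tm → Tm
  | fst : Tm → Tm
  | snd : Tm → Tm
  | zero : Tm
  | one : Tm
  | suc : Tm → Tm
  | gen : Tm
  | rec0 : Tm → Tm
  | rec1 : Tm → Tm → Tm
  | rec2 : Tm → Tm → Tm → Tm
  | recN : Tm → Tm → Tm → Tm
  deriving DecidableEq

/-- The numeral `n̄ = Sⁿ 0`. -/
def numeral : ℕ → Tm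
  | 0 => .zero
  | n + 1 => .suc (numeral n)

/-- Booleans as terms. -/
def ofBool : Bool → Tm
  | false => .zero
  | true => .one

/-- de Bruijn lifting of variables `≥ d`. -/
def lift (d : ℕ) : Tm → Tm
  | .var i => if i < d then .var i else .var (i + 1)
  | .lam t => .lam (lift (d + 1) t)
  | .app t u => .app (lift d t) (lift d u)
  | .pair t u => .pair (lift d t) (lift d u)
  | .fst t => .fst (lift d t)
  | .snd t => .snd (lift d t)
  | .zero => .zero
  | .one => .one
  | .suc t => .suc (lift d t)
  | .gen => .gen
  | .rec0 C => .rec0 (lift (d + 1) C)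
  | .rec1 C a => .rec1 (lift (d + 1) C) (lift d a)
  | .rec2 C a b => .rec2 (lift (d + 1) C) (lift d a) (lift d b)
  | .recN C a g => .recN (lift (d + 1) C) (lift d a) (lift d g)

/-- Capture-avoiding substitution `t[a/k]` (de Bruijn). -/
def subst : Tm → ℕ → Tm → Tm
  | .var i, k, a => if i < k then .var i else if i = k then a else .var (i - 1)
  | .lam t, k, a => .lam (subst t (k + 1) (lift 0 a))
  | .app t u, k, a => .app (subst t k a) (subst u k a)
  | .pair t u, k, a => .pair (subst t k a) (subst u k a)
  | .fst t, k, a => .fst (subst t k a)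
  | .snd t, k, a => .snd (subst t k a)
  | .zero, _, _ => .zero
  | .one, _, _ => .one
  | .suc t, k, a => .suc (subst t k a)
  | .gen, _, _ => .gen
  | .rec0 C, k, a => .rec0 (subst C (k + 1) (lift 0 a))
  | .rec1 C c, k, a => .rec1 (subst C (k + 1) (lift 0 a)) (subst c k a)
  | .rec2 C c0 c1, k, a => .rec2 (subst C (k + 1) (lift 0 a)) (subst c0 k a) (subst c1 k a)
  | .recN C cz g, k, a => .recN (subst C (k + 1) (lift 0 a)) (subst cz k a) (subst g k a)

/-- The condition-free base reduction (β/ι). -/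
inductive Step : Tm → Tm → Prop
  | beta (t a : Tm) : Step (.app (.lam t) a) (subst t 0 a)
  | fstPair (u v : Tm) : Step (.fst (.pair u v)) u
  | sndPair (u v : Tm) : Step (.snd (.pair u v)) v
  | rec1Zero (C c : Tm) : Step (.app (.rec1 C c) .zero) c
  | rec2Zero (C c0 c1 : Tm) : Step (.app (.rec2 C c0 c1) .zero) c0
  | rec2One (C c0 c1 : Tm) : Step (.app (.rec2 C c0 c1) .one) c1
  | recNZero (C cz g : Tm) : Step (.app (.recN C cz g) .zero) cz
  | recNSuc (C cz g : Tm) (k : ℕ) :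
      Step (.app (.recN C cz g) (.suc (numeral k)))
        (.app (.app g (numeral k)) (.app (.recN C cz g) (numeral k)))

/-- Evaluation contexts `E ::= [] | E u | E.1 | E.2 | S E | f E | rec … E`. -/
inductive Ctx : Type
  | hole : Ctx
  | appL : Ctx → Tm → Ctx
  | fst : Ctx → Ctx
  | snd : Ctx → Ctx
  | suc : Ctx → Ctx
  | genApp : Ctx → Ctx
  | rec0Arg : Tm → Ctx → Ctx
  | rec1Arg : Tm → Tm → Ctx → Ctx
  | rec2Arg : Tm → Tm → Tm → Ctx → Ctx
  | recNArg : Tm → Tm → Tm → Ctx → Ctx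

/-- Plugging a term into the hole of an evaluation context. -/
def Ctx.fill : Ctx → Tm → Tm
  | .hole, e => e
  | .appL E u, e => .app (E.fill e) u
  | .fst E, e => .fst (E.fill e)
  | .snd E, e => .snd (E.fill e)
  | .suc E, e => .suc (E.fill e)
  | .genApp E, e => .app .gen (E.fill e)
  | .rec0Arg C E, e => .app (.rec0 C) (E.fill e)
  | .rec1Arg C a E, e => .app (.rec1 C a) (E.fill e)
  | .rec2Arg C a b E, e => .app (.rec2 C a b) (E.fill e)
  | .recNArg C cz g E, e => .app (.recN C cz g) (E.fill e)

/-- The condition-indexed one-step reduction `t →_p u`: generated by the base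
reduction, the rule `f k̄ →_p p(k)` for `k ∈ dom p`, and closure under
evaluation contexts. -/
inductive Red (p : Cond) : Tm → Tm → Prop
  | base {t u : Tm} : Step t u → Red p t u
  | genRed {k : ℕ} {b : Bool} : (k, b) ∈ p → Red p (.app .gen (numeral k)) (ofBool b)
  | ctx {e e' : Tm} (E : Ctx) : Red p e e' → Red p (E.fill e) (E.fill e')

/-- Multi-step reduction `t →*_p u`. -/
def Reds (p : Cond) : Tm → Tm → Prop := Relation.ReflTransGen (Red p)

/-- `t` is in `p`-whnf: no further `p`-reduction. -/
def Whnf (p : Cond) (t : Tm) : Prop := ∀ u, ¬ Red p t u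

/-- `t` is canonical (at `p`): it has no further reduction at any extension of `p`. -/
def Canonical (p : Cond) (t : Tm) : Prop := ∀ q : Cond, p ⊆ q → ∀ u, ¬ Red q t u

/-- A proper `p`-whnf: a `p`-whnf that is canonical or of the form `E[f k̄]`
with `k ∉ dom p`. -/
def ProperWhnf (p : Cond) (t : Tm) : Prop :=
  Whnf p t ∧ (Canonical p t ∨
    ∃ (E : Ctx) (k : ℕ), t = E.fill (.app .gen (numeral k)) ∧ k ∉ condDom p)

/-! Reduction at a functional condition is deterministic. So as long as the terms on the
`p(m↦0)`-reduction path from `t` still have a `p`-redex, that `p`-step is also the unique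
`p(m↦0)`-step and the unique `p(m↦1)`-step, and both given reductions pass through it. The
path either ends in the given proper `p(m↦0)`-whnf, which stays a proper whnf at the smaller
condition `p`, or it reaches a `p`-whnf that still has a `p(m↦0)`-step; that step can only
be `f m̄ → 0`, so the term is `E[f m̄]` with `m ∉ dom p`. -/

theorem IsFunc.condExt {p : Cond} (hp : IsFunc p) {m : ℕ} (hm : m ∉ condDom p) (b : Bool) :
    IsFunc (condExt p m b) := by
  intro x hx y hy hxy
  rcases Finset.mem_insert.mp hx with rfl | hx' <;> rcases Finset.mem_insert.mp hy with rfl | hy'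
  · rfl
  · exact absurd (Finset.mem_image.mpr ⟨y, hy', hxy.symm⟩) hm
  · exact absurd (Finset.mem_image.mpr ⟨x, hx', hxy⟩) hm
  · exact hp x hx' y hy' hxy

theorem Red.mono {p q : Cond} (hpq : p ⊆ q) {t u : Tm} (h : Red p t u) : Red q t u := by
  induction h with
  | base hs => exact .base hs
  | genRed hk => exact .genRed (hpq hk)
  | ctx E _ ih => exact .ctx E ih

theorem Canonical.of_cond {p : Cond} {t : Tm} (h : Canonical p t) (q : Cond) : Canonical q t :=
  fun r _ u hu => h (p ∪ r) Finset.subset_union_left u (hu.mono Finset.subset_union_right)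

theorem condDom_mono {p q : Cond} (hpq : p ⊆ q) : condDom p ⊆ condDom q :=
  Finset.image_subset_image hpq

theorem ProperWhnf.of_subset {p q : Cond} (hpq : p ⊆ q) {t : Tm} (h : ProperWhnf q t) :
    ProperWhnf p t := by
  refine ⟨fun u hu => h.1 u (hu.mono hpq), ?_⟩
  obtain hc | ⟨E, k, rfl, hk⟩ := h.2
  · exact .inl (hc.of_cond p)
  · exact .inr ⟨E, k, rfl, fun hkp => hk (condDom_mono hpq hkp)⟩

/-- `Red` with evaluation contexts unfolded into one congruence rule per context former,
so that it can be inverted by `cases`. -/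
inductive RedCong (q : Cond) : Tm → Tm → Prop
  | base {t u : Tm} : Step t u → RedCong q t u
  | genRed {k : ℕ} {b : Bool} : (k, b) ∈ q → RedCong q (.app .gen (numeral k)) (ofBool b)
  | appL {t t' : Tm} (u : Tm) : RedCong q t t' → RedCong q (.app t u) (.app t' u)
  | fst {t t' : Tm} : RedCong q t t' → RedCong q (.fst t) (.fst t')
  | snd {t t' : Tm} : RedCong q t t' → RedCong q (.snd t) (.snd t')
  | suc {t t' : Tm} : RedCong q t t' → RedCong q (.suc t) (.suc t')
  | genApp {t t' : Tm} : RedCong q t t' → RedCong q (.app .gen t) (.app .gen t')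
  | rec0Arg {t t' : Tm} (C : Tm) :
      RedCong q t t' → RedCong q (.app (.rec0 C) t) (.app (.rec0 C) t')
  | rec1Arg {t t' : Tm} (C a : Tm) :
      RedCong q t t' → RedCong q (.app (.rec1 C a) t) (.app (.rec1 C a) t')
  | rec2Arg {t t' : Tm} (C a b : Tm) :
      RedCong q t t' → RedCong q (.app (.rec2 C a b) t) (.app (.rec2 C a b) t')
  | recNArg {t t' : Tm} (C a g : Tm) :
      RedCong q t t' → RedCong q (.app (.recN C a g) t) (.app (.recN C a g) t')

theorem RedCong.fill {q : Cond} {e e' : Tm} (h : RedCong q e e') :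
    ∀ E : Ctx, RedCong q (E.fill e) (E.fill e')
  | .hole => h
  | .appL E u => .appL u (h.fill E)
  | .fst E => .fst (h.fill E)
  | .snd E => .snd (h.fill E)
  | .suc E => .suc (h.fill E)
  | .genApp E => .genApp (h.fill E)
  | .rec0Arg C E => .rec0Arg C (h.fill E)
  | .rec1Arg C a E => .rec1Arg C a (h.fill E)
  | .rec2Arg C a b E => .rec2Arg C a b (h.fill E)
  | .recNArg C a g E => .recNArg C a g (h.fill E)

theorem Red.toRedCong {q : Cond} {t u : Tm} (h : Red q t u) : RedCong q t u := by
  induction h with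
  | base hs => exact .base hs
  | genRed hk => exact .genRed hk
  | ctx E _ ih => exact ih.fill E

theorem RedCong.head {q : Cond} {t u : Tm} (h : RedCong q t u) :
    (∃ a b, t = .app a b) ∨ (∃ a, t = .fst a) ∨ (∃ a, t = .snd a) ∨
      (∃ a, t = .suc a) := by
  rcases h with ⟨⟨⟩⟩ | _ | _ | _ | _ | _ <;> simp

theorem RedCong.not_numeral {q : Cond} (k : ℕ) {u : Tm} : ¬ RedCong q (numeral k) u := by
  induction k generalizing u with
  | zero => exact fun h => by simpa [numeral] using h.head
  | succ k ih =>
    intro h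
    cases h with
    | base hs => cases hs
    | suc h => exact ih h

theorem numeral_injective : Function.Injective numeral
  | 0, 0, _ => rfl
  | j + 1, k + 1, h => by
    rw [numeral_injective (Tm.suc.inj h)]
  | 0, _ + 1, h | _ + 1, 0, h => by cases h

theorem Step.eq {t u v : Tm} (hu : Step t u) (hv : Step t v) : u = v := by
  cases hu with
  | recNSuc C cz g k =>
    generalize numeral k = n at hv ⊢
    cases hv
    rfl
  | _ => cases hv; rfl

theorem RedCong.eq_of_step {q : Cond} {t u v : Tm} (hs : Step t u) (hv : RedCong q t v) :
    v = u := by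
  cases hv with
  | base h => exact h.eq hs
  | _ =>
    cases hs <;> exfalso <;> rename_i h
    all_goals first
      | exact not_numeral (_ + 1) h
      | simpa using h.head

theorem RedCong.eq {q : Cond} (hq : IsFunc q) {t u v : Tm} (hu : RedCong q t u)
    (hv : RedCong q t v) : u = v := by
  induction hu generalizing v with
  | base hs => exact (hv.eq_of_step hs).symm
  | genRed hk =>
    generalize hn : numeral _ = n at hv
    cases hv with
    | base hs => cases hs
    | genRed hk' =>
      obtain rfl := numeral_injective hn
      exact congrArg ofBool (hq _ hk _ hk' rfl)
    | appL _ h => simpa using h.head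
    | genApp h => exact absurd (hn ▸ h) (not_numeral _)
  | appL _ h ih | fst h ih | snd h ih | suc h ih | genApp h ih | rec0Arg _ h ih
  | rec1Arg _ _ h ih | rec2Arg _ _ _ h ih | recNArg _ _ _ h ih =>
    -- Distinct rules overlap only at a λ, pair, recursor, `0`, `1`, `f` or numeral, which do
    -- not reduce.
    cases hv <;> (try cases ‹Step _ _›)
    all_goals first
      | (congr 1; solve_by_elim)
      | exfalso
        rename_i h'
        first
          | exact not_numeral (_ + 1) h
          | exact not_numeral _ h
          | simpa using h.head
          | simpa using h'.head

theorem Red.eq {q : Cond} (hq : IsFunc q) {t u v : Tm} (hu : Red q t u) (hv : Red q t v) :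
    u = v :=
  hu.toRedCong.eq hq hv.toRedCong

def Ctx.comp : Ctx → Ctx → Ctx
  | .hole, F => F
  | .appL E u, F => .appL (E.comp F) u
  | .fst E, F => .fst (E.comp F)
  | .snd E, F => .snd (E.comp F)
  | .suc E, F => .suc (E.comp F)
  | .genApp E, F => .genApp (E.comp F)
  | .rec0Arg C E, F => .rec0Arg C (E.comp F)
  | .rec1Arg C a E, F => .rec1Arg C a (E.comp F)
  | .rec2Arg C a b E, F => .rec2Arg C a b (E.comp F)
  | .recNArg C a g E, F => .recNArg C a g (E.comp F)

theorem Ctx.fill_comp (E F : Ctx) (e : Tm) : (E.comp F).fill e = E.fill (F.fill e) := by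
  induction E <;> simp only [Ctx.comp, Ctx.fill, *]

theorem Red.exists_eq_fill_gen_of_whnf {p : Cond} {m : ℕ} {b : Bool} {t u : Tm}
    (h : Red (condExt p m b) t u) (ht : Whnf p t) :
    ∃ E : Ctx, t = E.fill (.app .gen (numeral m)) := by
  induction h with
  | base hs => exact absurd (.base hs) (ht _)
  | genRed hk =>
    rcases Finset.mem_insert.mp hk with hk | hk
    · obtain ⟨rfl, -⟩ := Prod.mk.inj hk
      exact ⟨.hole, rfl⟩
    · exact absurd (.genRed hk) (ht _)
  | ctx E _ ih =>
    obtain ⟨F, rfl⟩ := ih fun x hx => ht _ (.ctx E hx)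
    exact ⟨E.comp F, (Ctx.fill_comp E F _).symm⟩

theorem Red.of_condExt {p : Cond} {m : ℕ} {b : Bool} (hq : IsFunc (condExt p m b)) {t u : Tm}
    (h : Red (condExt p m b) t u) :
    Red p t u ∨ (Whnf p t ∧ ∃ E : Ctx, t = E.fill (.app .gen (numeral m))) := by
  by_cases ht : Whnf p t
  · exact .inr ⟨ht, h.exists_eq_fill_gen_of_whnf ht⟩
  · obtain ⟨u', hu'⟩ := not_forall_not.mp ht
    rw [h.eq hq (hu'.mono (Finset.subset_insert _ _))]
    exact .inl hu'

theorem Reds.of_red_of_whnf {q : Cond} (hq : IsFunc q) {t t' v : Tm} (hr : Red q t t')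
    (htv : Reds q t v) (hv : Whnf q v) : Reds q t' v := by
  rcases htv.cases_head with rfl | ⟨t'', hr', ht''v⟩
  · exact absurd hr (hv t')
  · exact hr.eq hq hr' ▸ ht''v

/-- If `m ∉ dom p` and `t` reduces to a proper `p(m↦0)`-whnf and to a proper
`p(m↦1)`-whnf, then `t` reduces to a proper `p`-whnf. -/
theorem stmt13 (p : Cond) (hp : IsFunc p) (m : ℕ) (hm : m ∉ condDom p) (t : Tm)
    (h0 : ∃ u, Reds (condExt p m false) t u ∧ ProperWhnf (condExt p m false) u)
    (h1 : ∃ v, Reds (condExt p m true) t v ∧ ProperWhnf (condExt p m true) v) :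
    ∃ w, Reds p t w ∧ ProperWhnf p w := by
  obtain ⟨u, htu, hu⟩ := h0
  obtain ⟨v, htv, hv⟩ := h1
  induction htu using Relation.ReflTransGen.head_induction_on with
  | refl => exact ⟨u, .refl, hu.of_subset (Finset.subset_insert _ _)⟩
  | head hstep _ ih =>
    rcases hstep.of_condExt (hp.condExt hm false) with hpstep | ⟨hwhnf, E, rfl⟩
    · have htv' := htv.of_red_of_whnf (hp.condExt hm true)
        (hpstep.mono (Finset.subset_insert _ _)) hv.1
      obtain ⟨w, htw, hw⟩ := ih htv'
      exact ⟨w, .head hpstep htw, hw⟩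
    · exact ⟨_, .refl, hwhnf, .inr ⟨E, m, rfl, hm⟩⟩
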